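/- Let ω ∈ Ω be such that T(ω) < +∞. Setting χ = (1/q)·(1,…,1) and, for n ≥ 1, D̃_n(ω) = |ln Λ_n(ω) − ln‖Y^{(n)}(ω) χ‖|, where Λ_n(ω) is the spectral radius of X^{(n)}(ω) (which is strictly positive by the Perron–Frobenius theorem), one has sup_{n≥1} D̃_n(ω) < +∞. -/

import Mathlib

/-!
Every `X_n` lies in `S`, so every column of `X^{(n)}` has positive sum; a nonnegative matrix
whose column sums are all `≥ m` has spectral radius `≥ m` (Gelfand's formula for the row-sum
norm), hence `Λ_n > 0`. Once `X^{(T)}` is strictly positive, the entries in each of its rows are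
comparable up to a factor `c > 0`, and left multiplication by nonnegative matrices preserves this.
So for `n ≥ T` every column sum of `X^{(n)}` is at least `c / q` times its total mass
`N₁(X^{(n)}) = q ‖Y^{(n)} χ‖`, which squeezes `Λ_n` between `c ‖Y^{(n)} χ‖` and `q ‖Y^{(n)} χ‖`.
-/

open MeasureTheory ProbabilityTheory Filter Topology Matrix Finset

noncomputable section

namespace StablePaper

/-- The set of `q × q` matrices. -/
abbrev Mat (q : ℕ) := Matrix (Fin q) (Fin q) ℝ

instance {q : ℕ} : MeasurableSpace (Mat q) := MeasurableSpace.pi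

/-- Membership in the semigroup `S`: nonnegative entries, every row and every
column contains a strictly positive entry. -/
def memS {q : ℕ} (g : Mat q) : Prop :=
  (∀ i j, 0 ≤ g i j) ∧ (∀ i, ∃ j, 0 < g i j) ∧ (∀ j, ∃ i, 0 < g i j)

/-- Membership in `S°`: all entries strictly positive. -/
def memS0 {q : ℕ} (g : Mat q) : Prop := ∀ i j, 0 < g i j

/-- The norm `‖x‖ = ∑ i, |x i|` on `ℝ^q`. -/
def nrm {q : ℕ} (x : Fin q → ℝ) : ℝ := ∑ i, |x i|

/-- The cone `C̄` of vectors with nonnegative coordinates. -/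
def inCbar {q : ℕ} (x : Fin q → ℝ) : Prop := ∀ i, 0 ≤ x i

/-- `B̄`: unit vectors of `C̄`. -/
def inBbar {q : ℕ} (x : Fin q → ℝ) : Prop := inCbar x ∧ nrm x = 1

/-- `B`: unit vectors with strictly positive coordinates. -/
def inB {q : ℕ} (x : Fin q → ℝ) : Prop := (∀ i, 0 < x i) ∧ nrm x = 1

/-- The projective action `g · x = gx / ‖gx‖`. -/
def proj {q : ℕ} (g : Mat q) (x : Fin q → ℝ) : Fin q → ℝ :=
  fun i => g.mulVec x i / nrm (g.mulVec x)

/-- `m(x,y) = min { x i / y i : y i > 0 }`. -/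
def mfun {q : ℕ} (x y : Fin q → ℝ) : ℝ :=
  sInf ((fun i => x i / y i) '' {i | 0 < y i})

/-- The distance `d(x,y) = φ(m(x,y) m(y,x))` with `φ(s) = (1-s)/(1+s)`. -/
def dB {q : ℕ} (x y : Fin q → ℝ) : ℝ :=
  (1 - mfun x y * mfun y x) / (1 + mfun x y * mfun y x)

/-- The cocycle `ξ(g,x) = ln ‖gx‖`. -/
def xi {q : ℕ} (g : Mat q) (x : Fin q → ℝ) : ℝ := Real.log (nrm (g.mulVec x))

/-- `X^{(n)} = X_n ⋯ X_1` (with `X^{(0)}` the identity matrix). -/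
def Xprod {q : ℕ} {Ω : Type} (X : ℕ → Ω → Mat q) : ℕ → Ω → Mat q
  | 0 => fun _ => 1
  | n + 1 => fun ω => X (n + 1) ω * Xprod X n ω

/-- `Y^{(n)} = Y_1 ⋯ Y_n` where `Y_k = X_kᵀ`. -/
def Yprod {q : ℕ} {Ω : Type} (X : ℕ → Ω → Mat q) : ℕ → Ω → Mat q
  | 0 => fun _ => 1
  | n + 1 => fun ω => Yprod X n ω * (X (n + 1) ω)ᵀ

/-- `Ỹ^{(n)} = Y_n ⋯ Y_1` where `Y_k = X_kᵀ`. -/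
def Ytil {q : ℕ} {Ω : Type} (X : ℕ → Ω → Mat q) : ℕ → Ω → Mat q
  | 0 => fun _ => 1
  | n + 1 => fun ω => (X (n + 1) ω)ᵀ * Ytil X n ω

/-- The hitting time `T = inf { n ≥ 1 : X^{(n)} ∈ S° }` (equal to `⊤` if no such `n`). -/
def hitT {q : ℕ} {Ω : Type} (X : ℕ → Ω → Mat q) (ω : Ω) : ℕ∞ :=
  ⨅ (n : ℕ) (_ : 1 ≤ n ∧ memS0 (Xprod X n ω)), (n : ℕ∞)

/-- The indicator `1_{[T ≤ n]}`. -/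
def indT {q : ℕ} {Ω : Type} (X : ℕ → Ω → Mat q) (n : ℕ) (ω : Ω) : ℝ :=
  if hitT X ω ≤ (n : ℕ∞) then 1 else 0

/-- Condition (C). -/
def CondC {q : ℕ} {Ω : Type} [MeasurableSpace Ω] (P : Measure Ω)
    (X : ℕ → Ω → Mat q) : Prop :=
  0 < P {ω | ∃ n, 1 ≤ n ∧ memS0 (Xprod X n ω)}

/-- `(X_n)` is an i.i.d. sequence. -/
def IID {q : ℕ} {Ω : Type} [MeasurableSpace Ω] (P : Measure Ω)
    (X : ℕ → Ω → Mat q) : Prop :=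
  (∀ n, Measurable (X n)) ∧
  iIndepFun X P ∧
  ∀ n, Measure.map (X n) P = Measure.map (X 1) P

/-- `N₁`-functional of a matrix: the sum of all entries. -/
def N1fun {q : ℕ} (g : Mat q) : ℝ := ∑ i, ∑ j, g i j

/-- `V₁`-functional of a matrix: the minimal row sum. -/
def V1fun {q : ℕ} (g : Mat q) : ℝ := sInf {r : ℝ | ∃ i, r = ∑ j, g i j}

/-- The spectral radius of a real matrix (via its complex spectrum). -/
def specRad {q : ℕ} (g : Mat q) : ℝ :=
  (spectralRadius ℂ (g.map (algebraMap ℝ ℂ))).toReal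

/-- A slowly varying function `L : (0,∞) → (0,∞)`. -/
def SlowlyVarying (L : ℝ → ℝ) : Prop :=
  (∀ u : ℝ, 0 < u → 0 < L u) ∧
  ∀ l : ℝ, 0 < l → Tendsto (fun u => L (l * u) / L u) atTop (𝓝 1)

/-- Convolution of two measures on `ℝ`. -/
def mconv (ρ₁ ρ₂ : Measure ℝ) : Measure ℝ :=
  Measure.map (fun p : ℝ × ℝ => p.1 + p.2) (ρ₁.prod ρ₂)

/-- `n`-fold convolution power. -/
def convPow (ρ : Measure ℝ) : ℕ → Measure ℝ
  | 0 => Measure.dirac 0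
  | n + 1 => mconv (convPow ρ n) ρ

/-- A stable law of index `α`: a non-Dirac probability measure `ρ` such that for
every `n ≥ 1` there is `d_n ∈ ℝ` with `ρ^{*n}` equal to the image of `ρ` under
`x ↦ n^{1/α} x + d_n`. -/
def IsStableLaw (α : ℝ) (ρ : Measure ℝ) : Prop :=
  IsProbabilityMeasure ρ ∧ (¬ ∃ c : ℝ, ρ = Measure.dirac c) ∧
  ∀ n : ℕ, 1 ≤ n → ∃ d : ℝ,
    convPow ρ n = Measure.map (fun x => (n : ℝ) ^ (1 / α) * x + d) ρ

/-- Convergence in distribution of real random variables to the law `ρ`. -/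
def ConvInDistrib {Ω : Type} [MeasurableSpace Ω] (P : Measure Ω)
    (Z : ℕ → Ω → ℝ) (ρ : Measure ℝ) : Prop :=
  ∀ f : BoundedContinuousFunction ℝ ℝ,
    Tendsto (fun n => ∫ ω, f (Z n ω) ∂P) atTop (𝓝 (∫ x, f x ∂ρ))

/-- `μ^{(n)}`: the law of `Y^{(n)} = Y_1 ⋯ Y_n`. -/
def muN {q : ℕ} {Ω : Type} [MeasurableSpace Ω] (P : Measure Ω)
    (X : ℕ → Ω → Mat q) (n : ℕ) : Measure (Mat q) :=
  Measure.map (fun ω => Yprod X n ω) P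

/-- The contraction coefficient `c(g)`. -/
def cg {q : ℕ} (g : Mat q) : ℝ :=
  sSup {r : ℝ | ∃ x y, inBbar x ∧ inBbar y ∧ x ≠ y ∧
    r = dB (proj g x) (proj g y) / dB x y}

/-- The coefficient `c(μ^{(n)})`. -/
def cmu {q : ℕ} {Ω : Type} [MeasurableSpace Ω] (P : Measure Ω)
    (X : ℕ → Ω → Mat q) (n : ℕ) : ℝ :=
  sSup {r : ℝ | ∃ y y', inBbar y ∧ inBbar y' ∧ y ≠ y' ∧
    r = ∫ g, dB (proj g y) (proj g y') / dB y y' ∂(muN P X n)}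

/-- `κ(μ) = inf_{n ≥ 1} c(μ^{(n)})^{1/n}`. -/
def kappa {q : ℕ} {Ω : Type} [MeasurableSpace Ω] (P : Measure Ω)
    (X : ℕ → Ω → Mat q) : ℝ :=
  sInf {r : ℝ | ∃ n, 1 ≤ n ∧ r = cmu P X n ^ ((n : ℝ)⁻¹)}

/-- `ν` is `μ`-invariant. -/
def MuInvariant {q : ℕ} (μ : Measure (Mat q)) (ν : Measure (Fin q → ℝ)) : Prop :=
  ∀ f : BoundedContinuousFunction (Fin q → ℝ) ℝ,
    ∫ x, (∫ g, f (proj g x) ∂μ) ∂ν = ∫ x, f x ∂ν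

/-- The Fourier kernels `P_t` (so `P = P_0`). -/
def Ptop {q : ℕ} (μ : Measure (Mat q)) (t : ℝ) (f : (Fin q → ℝ) → ℂ)
    (x : Fin q → ℝ) : ℂ :=
  ∫ g, Complex.exp (Complex.I * (t : ℂ) * (xi g x : ℂ)) * f (proj g x) ∂μ

/-- The sup norm `‖f‖_u` over `B̄`. -/
def supnorm {q : ℕ} (f : (Fin q → ℝ) → ℂ) : ℝ :=
  sSup {r : ℝ | ∃ x, inBbar x ∧ r = ‖f x‖}

/-- The Lipschitz seminorm `m(f)` with respect to the distance `d` on `B̄`. -/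
def mlip {q : ℕ} (f : (Fin q → ℝ) → ℂ) : ℝ :=
  sSup {r : ℝ | ∃ x y, inBbar x ∧ inBbar y ∧ x ≠ y ∧
    r = ‖f x - f y‖ / dB x y}

/-- Membership in the space `L` of `d`-Lipschitz functions on `B̄`. -/
def memL {q : ℕ} (f : (Fin q → ℝ) → ℂ) : Prop :=
  ∃ M : ℝ, ∀ x y, inBbar x → inBbar y → ‖f x - f y‖ ≤ M * dB x y

/-- The norm `‖f‖_L = ‖f‖_u + m(f)`. -/
def normL {q : ℕ} (f : (Fin q → ℝ) → ℂ) : ℝ := supnorm f + mlip f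

/-- `‖g‖ = sup { ‖gx‖ : x ∈ B̄ }`. -/
def opg {q : ℕ} (g : Mat q) : ℝ :=
  sSup {r : ℝ | ∃ x, inBbar x ∧ r = nrm (g.mulVec x)}

/-- `v(g) = inf { ‖gx‖ : x ∈ B̄ }`. -/
def vg {q : ℕ} (g : Mat q) : ℝ :=
  sInf {r : ℝ | ∃ x, inBbar x ∧ r = nrm (g.mulVec x)}

/-- `ℓ(g) = |ln ‖g‖| + |ln v(g)|`. -/
def ellg {q : ℕ} (g : Mat q) : ℝ := |Real.log (opg g)| + |Real.log (vg g)|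

/-- `ε(t) = ∫ min(|t| ℓ(g), 2) dμ(g)`. -/
def epsT {q : ℕ} (μ : Measure (Mat q)) (t : ℝ) : ℝ :=
  ∫ g, min (|t| * ellg g) 2 ∂μ

/-- The operator norm of `P_t - P` on `L`. -/
def opNormDiff {q : ℕ} (μ : Measure (Mat q)) (t : ℝ) : ℝ :=
  sSup {r : ℝ | ∃ f : (Fin q → ℝ) → ℂ, memL f ∧ normL f ≤ 1 ∧
    r = normL (fun x => Ptop μ t f x - Ptop μ 0 f x)}

section SpectralRadius

attribute [local instance] Matrix.linftyOpNormedRing Matrix.linftyOpNormedAlgebra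

variable {q : ℕ}

lemma coe_rowNNNorm_map (g : Mat q) (i : Fin q) :
    ((∑ j, ‖(g.map (algebraMap ℝ ℂ)) i j‖₊ : NNReal) : ℝ) = ∑ j, |g i j| := by
  push_cast
  simp [Complex.norm_real]

lemma sum_row_le_norm_map (g : Mat q) (i : Fin q) :
    ∑ j, g i j ≤ ‖g.map (algebraMap ℝ ℂ)‖ := by
  rw [Matrix.linfty_opNorm_def]
  calc ∑ j, g i j ≤ ∑ j, |g i j| := Finset.sum_le_sum fun j _ => le_abs_self _
    _ = _ := (coe_rowNNNorm_map g i).symm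
    _ ≤ _ := NNReal.coe_le_coe.2 <| Finset.le_sup
      (f := fun i => ∑ j, ‖(g.map (algebraMap ℝ ℂ)) i j‖₊) (Finset.mem_univ i)

lemma norm_map_le_N1fun {g : Mat q} (hg : ∀ i j, 0 ≤ g i j) :
    ‖g.map (algebraMap ℝ ℂ)‖ ≤ N1fun g := by
  have hN : 0 ≤ N1fun g := Finset.sum_nonneg fun i _ => Finset.sum_nonneg fun j _ => hg i j
  rw [Matrix.linfty_opNorm_def, ← Real.coe_toNNReal _ hN, NNReal.coe_le_coe]
  refine Finset.sup_le fun i _ => (Real.le_toNNReal_iff_coe_le hN).2 ?_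
  rw [coe_rowNNNorm_map]
  simp only [abs_of_nonneg (hg _ _)]
  exact Finset.single_le_sum (f := fun i => ∑ j, g i j)
    (fun i _ => Finset.sum_nonneg fun j _ => hg i j) (Finset.mem_univ i)

lemma specRad_le_norm_map [NeZero q] (g : Mat q) : specRad g ≤ ‖g.map (algebraMap ℝ ℂ)‖ :=
  ENNReal.toReal_le_of_le_ofReal (norm_nonneg _) <| by
    rw [← coe_nnnorm, ENNReal.ofReal_coe_nnreal]
    exact spectrum.spectralRadius_le_nnnorm _

lemma le_specRad_of_pow_le_norm [NeZero q] {g : Mat q} {r : ℝ} (hr : 0 ≤ r)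
    (h : ∀ k, r ^ k ≤ ‖(g ^ k).map (algebraMap ℝ ℂ)‖) : r ≤ specRad g := by
  have : CompleteSpace (Matrix (Fin q) (Fin q) ℂ) := FiniteDimensional.complete ℂ _
  have hlim :=
    spectrum.pow_norm_pow_one_div_tendsto_nhds_spectralRadius (g.map (algebraMap ℝ ℂ))
  have hle : ENNReal.ofReal r ≤ spectralRadius ℂ (g.map (algebraMap ℝ ℂ)) := by
    refine ge_of_tendsto hlim ?_
    filter_upwards [eventually_ne_atTop 0] with k hk
    refine ENNReal.ofReal_le_ofReal ?_
    rw [← RingHom.mapMatrix_apply, ← map_pow, RingHom.mapMatrix_apply, one_div,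
      ← Real.pow_rpow_inv_natCast hr hk]
    exact Real.rpow_le_rpow (by positivity) (h k) (by positivity)
  have hfin : spectralRadius ℂ (g.map (algebraMap ℝ ℂ)) ≠ ⊤ :=
    ne_top_of_le_ne_top ENNReal.coe_ne_top (spectrum.spectralRadius_le_nnnorm _)
  exact (ENNReal.ofReal_le_iff_le_toReal hfin).1 hle

lemma pow_le_colSum_pow {g : Mat q} {m : ℝ} (hg : ∀ i j, 0 ≤ g i j) (hm0 : 0 ≤ m)
    (hm : ∀ j, m ≤ ∑ i, g i j) (k : ℕ) (j : Fin q) : m ^ k ≤ ∑ i, (g ^ k) i j := by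
  induction k generalizing j with
  | zero => simp [Matrix.one_apply]
  | succ k ih =>
    calc m ^ (k + 1) = m ^ k * m := pow_succ m k
      _ ≤ m ^ k * ∑ l, g l j := mul_le_mul_of_nonneg_left (hm j) (by positivity)
      _ = ∑ l, m ^ k * g l j := Finset.mul_sum _ _ _
      _ ≤ ∑ l, (∑ i, (g ^ k) i l) * g l j :=
        Finset.sum_le_sum fun l _ => mul_le_mul_of_nonneg_right (ih l) (hg l j)
      _ = ∑ i, (g ^ (k + 1)) i j := by
        simp only [pow_succ, Matrix.mul_apply, Finset.sum_mul]
        exact Finset.sum_comm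

lemma le_specRad_of_le_colSum [NeZero q] {g : Mat q} {m : ℝ} (hg : ∀ i j, 0 ≤ g i j)
    (hm0 : 0 ≤ m) (hm : ∀ j, m ≤ ∑ i, g i j) : m ≤ specRad g := by
  refine le_specRad_of_pow_le_norm hm0 fun k => ?_
  have hq : (0 : ℝ) < q := by exact_mod_cast Nat.pos_of_neZero q
  refine le_of_mul_le_mul_left ?_ hq
  calc (q : ℝ) * m ^ k = ∑ _j : Fin q, m ^ k := by simp
    _ ≤ ∑ j, ∑ i, (g ^ k) i j := Finset.sum_le_sum fun j _ => pow_le_colSum_pow hg hm0 hm k j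
    _ = ∑ i, ∑ j, (g ^ k) i j := Finset.sum_comm
    _ ≤ ∑ _i : Fin q, ‖(g ^ k).map (algebraMap ℝ ℂ)‖ :=
      Finset.sum_le_sum fun i _ => sum_row_le_norm_map _ i
    _ = q * ‖(g ^ k).map (algebraMap ℝ ℂ)‖ := by simp

lemma specRad_le_N1fun [NeZero q] {g : Mat q} (hg : ∀ i j, 0 ≤ g i j) : specRad g ≤ N1fun g :=
  (specRad_le_norm_map g).trans (norm_map_le_N1fun hg)

end SpectralRadius

section Products

variable {q : ℕ} {Ω : Type}

lemma memS_mul {g h : Mat q} (hg : memS g) (hh : memS h) : memS (g * h) := by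
  obtain ⟨hg0, hgr, hgc⟩ := hg
  obtain ⟨hh0, hhr, hhc⟩ := hh
  have hpos : ∀ i j l, 0 < g i l → 0 < h l j → 0 < (g * h) i j := fun i j l hil hlj =>
    Finset.sum_pos' (fun m _ => mul_nonneg (hg0 i m) (hh0 m j))
      ⟨l, Finset.mem_univ l, mul_pos hil hlj⟩
  refine ⟨fun i j => ?_, fun i => ?_, fun j => ?_⟩
  · rw [Matrix.mul_apply]
    exact Finset.sum_nonneg fun l _ => mul_nonneg (hg0 i l) (hh0 l j)
  · obtain ⟨l, hl⟩ := hgr i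
    obtain ⟨j, hj⟩ := hhr l
    exact ⟨j, hpos i j l hl hj⟩
  · obtain ⟨l, hl⟩ := hhc j
    obtain ⟨i, hi⟩ := hgc l
    exact ⟨i, hpos i j l hi hl⟩

lemma memS_Xprod {X : ℕ → Ω → Mat q} (hS : ∀ n, 1 ≤ n → ∀ ω, memS (X n ω)) (ω : Ω) {n : ℕ}
    (hn : 1 ≤ n) : memS (Xprod X n ω) := by
  induction n, hn using Nat.le_induction with
  | base => simpa [Xprod] using hS 1 le_rfl ω
  | succ n hn ih => exact memS_mul (hS (n + 1) (by omega) ω) ih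

lemma specRad_pos_of_memS [NeZero q] {g : Mat q} (hg : memS g) : 0 < specRad g := by
  obtain ⟨j₀, hj₀⟩ := Finite.exists_min fun j => ∑ i, g i j
  obtain ⟨i₀, hi₀⟩ := hg.2.2 j₀
  have hpos : 0 < ∑ i, g i j₀ :=
    Finset.sum_pos' (fun i _ => hg.1 i j₀) ⟨i₀, Finset.mem_univ i₀, hi₀⟩
  exact hpos.trans_le (le_specRad_of_le_colSum hg.1 hpos.le hj₀)

lemma exists_memS0_of_hitT_lt_top {X : ℕ → Ω → Mat q} {ω : Ω} (hT : hitT X ω < ⊤) :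
    ∃ t, 1 ≤ t ∧ memS0 (Xprod X t ω) := by
  by_contra! h
  refine hT.ne ?_
  simp only [hitT, iInf_eq_top]
  exact fun n hn => absurd hn.2 (h n hn.1)

lemma Yprod_eq_transpose (X : ℕ → Ω → Mat q) (ω : Ω) (n : ℕ) :
    Yprod X n ω = (Xprod X n ω)ᵀ := by
  induction n with
  | zero => exact Matrix.transpose_one.symm
  | succ n ih => simp [Yprod, Xprod, ih, Matrix.transpose_mul]

lemma nrm_transpose_mulVec_const {g : Mat q} (hg : ∀ i j, 0 ≤ g i j) {a : ℝ} (ha : 0 ≤ a) :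
    nrm (gᵀ *ᵥ fun _ => a) = a * N1fun g := by
  simp only [nrm, N1fun, Matrix.mulVec, dotProduct, Matrix.transpose_apply]
  calc ∑ j, |∑ i, g i j * a| = ∑ j, ∑ i, a * g i j := by
        refine Finset.sum_congr rfl fun j _ => ?_
        rw [abs_of_nonneg (Finset.sum_nonneg fun i _ => mul_nonneg (hg i j) ha)]
        simp only [mul_comm]
    _ = a * ∑ i, ∑ j, g i j := by rw [Finset.sum_comm, Finset.mul_sum]; simp only [Finset.mul_sum]

end Products

section RowComparable

variable {q : ℕ} {Ω : Type}

def RowComparable (c : ℝ) (g : Mat q) : Prop := ∀ i j j', c * g i j' ≤ g i j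

lemma RowComparable.mul_left {c : ℝ} {g h : Mat q} (hg : RowComparable c g)
    (hh : ∀ i j, 0 ≤ h i j) : RowComparable c (h * g) := by
  intro i j j'
  simp only [Matrix.mul_apply, Finset.mul_sum]
  exact Finset.sum_le_sum fun l _ => by
    rw [mul_left_comm]
    exact mul_le_mul_of_nonneg_left (hg l j j') (hh i l)

lemma RowComparable.mul_N1fun_le_colSum {c : ℝ} {g : Mat q} (hg : RowComparable c g)
    (j : Fin q) : c * N1fun g ≤ q * ∑ i, g i j :=
  calc c * N1fun g = ∑ j', ∑ i, c * g i j' := by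
        rw [N1fun, Finset.sum_comm, Finset.mul_sum]
        simp only [Finset.mul_sum]
    _ ≤ ∑ _j' : Fin q, ∑ i, g i j :=
        Finset.sum_le_sum fun j' _ => Finset.sum_le_sum fun i _ => hg i j j'
    _ = q * ∑ i, g i j := by simp

lemma exists_rowComparable_of_memS0 [NeZero q] {g : Mat q} (hg : memS0 g) :
    ∃ c, 0 < c ∧ RowComparable c g := by
  obtain ⟨⟨i₀, j₀, j₀'⟩, hmin⟩ := Finite.exists_min fun p : Fin q × Fin q × Fin q =>
    g p.1 p.2.1 / g p.1 p.2.2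
  refine ⟨g i₀ j₀ / g i₀ j₀', div_pos (hg _ _) (hg _ _), fun i j j' => ?_⟩
  rw [← le_div_iff₀ (hg i j')]
  exact hmin (i, j, j')

lemma rowComparable_Xprod {X : ℕ → Ω → Mat q} (hS : ∀ n, 1 ≤ n → ∀ ω, memS (X n ω))
    {ω : Ω} {c : ℝ} {t n : ℕ} (hc : RowComparable c (Xprod X t ω)) (hn : t ≤ n) :
    RowComparable c (Xprod X n ω) := by
  induction n, hn using Nat.le_induction with
  | base => exact hc
  | succ n hn ih => exact ih.mul_left (hS (n + 1) (by omega) ω).1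

lemma abs_log_specRad_sub_log_le [NeZero q] {g : Mat q} {c : ℝ} (hg : ∀ i j, 0 ≤ g i j)
    (hc : 0 < c) (hcg : RowComparable c g) (hρ : 0 < specRad g) :
    |Real.log (specRad g) - Real.log (N1fun g / q)| ≤ max |Real.log c| |Real.log q| := by
  have hq : (0 : ℝ) < q := by exact_mod_cast Nat.pos_of_neZero q
  have hN : 0 < N1fun g / q := div_pos (hρ.trans_le (specRad_le_N1fun hg)) hq
  have hlower : c * (N1fun g / q) ≤ specRad g :=
    le_specRad_of_le_colSum hg (by positivity) fun j => by
      rw [← mul_div_assoc, div_le_iff₀' hq]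
      exact hcg.mul_N1fun_le_colSum j
  have hupper : specRad g ≤ q * (N1fun g / q) := by
    rw [mul_div_cancel₀ _ hq.ne']
    exact specRad_le_N1fun hg
  have h₁ := Real.log_le_log (by positivity) hlower
  have h₂ := Real.log_le_log hρ hupper
  rw [Real.log_mul hc.ne' hN.ne'] at h₁
  rw [Real.log_mul hq.ne' hN.ne'] at h₂
  exact abs_le_max_abs_abs (by linarith) (by linarith)

end RowComparable

/-- **Lemma II.1 (iii).** If `T(ω) < ∞` then, with `χ = (1/q)·(1,…,1)`, the
quantities `D̃_n(ω) = |ln Λ_n(ω) − ln ‖Y^{(n)}(ω) χ‖|` are uniformly bounded in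
`n` (and the spectral radii `Λ_n(ω)` are strictly positive). -/
theorem statement3 {q : ℕ} (hq : 1 ≤ q) {Ω : Type} (X : ℕ → Ω → Mat q)
    (hS : ∀ n, 1 ≤ n → ∀ ω', memS (X n ω')) (ω : Ω) (hT : hitT X ω < ⊤) :
    (∀ n : ℕ, 1 ≤ n → 0 < specRad (Xprod X n ω)) ∧
    ∃ M : ℝ, ∀ n : ℕ, 1 ≤ n →
      |Real.log (specRad (Xprod X n ω))
        - Real.log (nrm ((Yprod X n ω).mulVec (fun _ => 1 / (q : ℝ))))| ≤ M := by
  have : NeZero q := ⟨by omega⟩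
  have hpos : ∀ n, 1 ≤ n → 0 < specRad (Xprod X n ω) := fun n hn =>
    specRad_pos_of_memS (memS_Xprod hS ω hn)
  refine ⟨hpos, ?_⟩
  obtain ⟨t, ht, hXt⟩ := exists_memS0_of_hitT_lt_top hT
  obtain ⟨c, hc, hcXt⟩ := exists_rowComparable_of_memS0 hXt
  have hbound : ∀ n ≥ t, |Real.log (specRad (Xprod X n ω))
      - Real.log (nrm ((Yprod X n ω).mulVec (fun _ => 1 / (q : ℝ))))|
      ≤ max |Real.log c| |Real.log q| := fun n hn => by
    have hX := (memS_Xprod hS ω (ht.trans hn)).1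
    rw [Yprod_eq_transpose, nrm_transpose_mulVec_const hX (by positivity), one_div_mul_eq_div]
    exact abs_log_specRad_sub_log_le hX hc (rowComparable_Xprod hS hcXt hn)
      (hpos n (ht.trans hn))
  obtain ⟨M, hM⟩ :=
    (isBoundedUnder_of_eventually_le (eventually_atTop.2 ⟨t, hbound⟩)).bddAbove_range
  exact ⟨M, fun n _ => hM ⟨n, rfl⟩⟩

end StablePaper
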